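/- arXiv:2010.10610 — 10 statements merged into one kernel-verified Lean document; each statement's English description precedes it below -/
import Mathlib

section
/- Finite intersections of portly subsets are portly: if U and V are both open, dense, and locally connected in a locally connected Hausdorff topological space X (meaning for every open connected subset W of X, the intersections W ∩ U and W ∩ V are connected), then U ∩ V is open, dense, and locally connected in X. -/
/-- A subset `U` of a topological space `X` is *portly* if it is open, dense, and
locally connected in `X`, i.e. its intersection with every open connected subset
of `X` is connected. -/
def Portly (X : Type*) [TopologicalSpace X] (U : Set X) : Prop :=
  IsOpen U ∧ Dense U ∧ ∀ W : Set X, IsOpen W → IsConnected W → IsConnected (W ∩ U)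

theorem stmt0 {X : Type*} [TopologicalSpace X] [T2Space X] [LocallyConnectedSpace X]
    (U V : Set X) (hU : Portly X U) (hV : Portly X V) : Portly X (U ∩ V) := by
  obtain ⟨hUo, hUd, hUc⟩ := hU
  obtain ⟨hVo, hVd, hVc⟩ := hV
  refine ⟨hUo.inter hVo, hUd.inter_of_isOpen_left hVd hUo, fun W hWo hWc => ?_⟩
  have h1 : IsConnected (W ∩ U) := hUc W hWo hWc
  have h2 : IsConnected ((W ∩ U) ∩ V) := hVc (W ∩ U) (hWo.inter hUo) h1
  simpa [Set.inter_assoc] using h2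
end

section
/- If U ⊆ V ⊆ X, U is portly in X (open, dense, locally connected in X), and V is open in X, then V is portly in X. -/
theorem stmt1 {X : Type*} [TopologicalSpace X] [T2Space X] [LocallyConnectedSpace X]
    (U V : Set X) (hUV : U ⊆ V) (hU : Portly X U) (hV : IsOpen V) : Portly X V := by
  obtain ⟨hUopen, hUdense, hUconn⟩ := hU
  refine ⟨hV, hUdense.mono hUV, fun W hW hWc => ?_⟩
  have h1 : IsConnected (W ∩ U) := hUconn W hW hWc
  refine h1.subset_closure (Set.inter_subset_inter_right W hUV) ?_
  intro x hx
  exact hUdense.open_subset_closure_inter hW hx.1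
end

section
/- If U ⊆ V ⊆ X, and U is portly in X, then U is portly in the subspace V. -/
theorem stmt2 {X : Type*} [TopologicalSpace X] [T2Space X] [LocallyConnectedSpace X]
    (U V : Set X) (hUV : U ⊆ V) (hU : Portly X U) :
    Portly V (Subtype.val ⁻¹' U) := by
  obtain ⟨hUo, hUd, hUc⟩ := hU
  refine ⟨hUo.preimage continuous_subtype_val, ?_, ?_⟩
  · rw [Subtype.dense_iff]
    intro x hx
    have : (Subtype.val '' ((Subtype.val : V → X) ⁻¹' U)) = U := by
      rw [Subtype.image_preimage_coe, Set.inter_eq_right.mpr hUV]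
    rw [this]
    exact hUd x
  · intro W hWo hWc
    obtain ⟨O, hOo, rfl⟩ := isOpen_induced_iff.mp hWo
    -- image of W under val
    have himg : (Subtype.val '' ((Subtype.val : V → X) ⁻¹' O)) = O ∩ V := by
      rw [Subtype.image_preimage_coe, Set.inter_comm]
    have hOVc : IsConnected (O ∩ V) := by
      rw [← himg]
      exact hWc.image _ continuous_subtype_val.continuousOn
    obtain ⟨x, hxO, hxV⟩ := hOVc.nonempty
    set C := connectedComponentIn O x with hC
    have hCo : IsOpen C := hOo.connectedComponentIn
    have hCc : IsConnected C := isConnected_connectedComponentIn_iff.mpr hxO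
    have hsub : O ∩ V ⊆ C :=
      hOVc.isPreconnected.subset_connectedComponentIn ⟨hxO, hxV⟩ Set.inter_subset_left
    have hkey : O ∩ U = C ∩ U := by
      apply Set.Subset.antisymm
      · intro y ⟨hyO, hyU⟩
        exact ⟨hsub ⟨hyO, hUV hyU⟩, hyU⟩
      · intro y ⟨hyC, hyU⟩
        exact ⟨connectedComponentIn_subset O x hyC, hyU⟩
    have hconn : IsConnected (O ∩ U) := hkey ▸ hUc C hCo hCc
    -- pull back to subtype
    have himg2 : (Subtype.val '' ((Subtype.val : V → X) ⁻¹' O ∩ Subtype.val ⁻¹' U)) = O ∩ U := by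
      rw [← Set.preimage_inter, Subtype.image_preimage_coe,
        Set.inter_eq_right.mpr (fun y (hy : y ∈ O ∩ U) => hUV hy.2)]
    constructor
    · rcases hconn.nonempty with ⟨y, hyO, hyU⟩
      exact ⟨⟨y, hUV hyU⟩, hyO, hyU⟩
    · rw [← Topology.IsInducing.subtypeVal.isPreconnected_image, himg2]
      exact hconn.isPreconnected
end

section
/- Portliness is transitive: if U is portly in V (as a subspace) and V is portly in X, then U is portly in X. -/
theorem stmt3 {X : Type*} [TopologicalSpace X] [T2Space X] [LocallyConnectedSpace X]
    (U V : Set X) (hUV : U ⊆ V)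
    (hUinV : Portly V (Subtype.val ⁻¹' U)) (hV : Portly X V) :
    Portly X U := by
  obtain ⟨hUo, hUd, hUc⟩ := hUinV
  obtain ⟨hVo, hVd, hVc⟩ := hV
  have hemb : Topology.IsOpenEmbedding (Subtype.val : V → X) := hVo.isOpenEmbedding_subtypeVal
  have himg : (Subtype.val : V → X) '' (Subtype.val ⁻¹' U) = U := by
    rw [Set.image_preimage_eq_inter_range, Subtype.range_coe]
    exact Set.inter_eq_left.2 hUV
  refine ⟨?_, ?_, ?_⟩
  · have := hemb.isOpenMap _ hUo
    rwa [himg] at this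
  · -- density
    have hVU : V ⊆ closure U := by
      intro x hx
      have := closure_subtype.mp (hUd ⟨x, hx⟩)
      rwa [himg] at this
    have : Dense (closure U) := by
      intro x
      have := hVd x
      exact closure_mono hVU this
    rwa [dense_closure] at this
  · intro W hWo hWc
    have hWV : IsConnected (W ∩ V) := hVc W hWo hWc
    have hWVsub : W ∩ V ⊆ Set.range (Subtype.val : V → X) := by
      rw [Subtype.range_coe]; exact Set.inter_subset_right
    have hpre : IsConnected ((Subtype.val : V → X) ⁻¹' (W ∩ V)) := by
      refine ⟨?_, hWV.isPreconnected.preimage_of_isOpenMap Subtype.val_injective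
        hemb.isOpenMap hWVsub⟩
      obtain ⟨x, hxW, hxV⟩ := hWV.nonempty
      exact ⟨⟨x, hxV⟩, hxW, hxV⟩
    have hpreo : IsOpen ((Subtype.val : V → X) ⁻¹' (W ∩ V)) :=
      (hWo.inter hVo).preimage continuous_subtype_val
    have := hUc _ hpreo hpre
    have himg2 : (Subtype.val : V → X) '' ((Subtype.val ⁻¹' (W ∩ V)) ∩ (Subtype.val ⁻¹' U))
        = W ∩ U := by
      rw [← Set.preimage_inter, Set.image_preimage_eq_inter_range, Subtype.range_coe]
      ext x
      constructor
      · rintro ⟨⟨⟨h1, _⟩, h2⟩, _⟩; exact ⟨h1, h2⟩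
      · rintro ⟨h1, h2⟩; exact ⟨⟨⟨h1, hUV h2⟩, h2⟩, hUV h2⟩
    have hconn := this.image Subtype.val continuous_subtype_val.continuousOn
    rwa [himg2] at hconn
end

section
/- Locally portly subsets are portly: if (U_i)_{i∈I} is a family of open subsets of X and for each i, V_i ⊆ U_i is portly in U_i, then ⋃_i V_i is portly in ⋃_i U_i. -/
open Set Topology

section aux

variable {X : Type*} [TopologicalSpace X]

/-- Transfer connectedness from an ambient subset to the subtype preimage. -/
lemma isConnected_preim {T s : Set X} (hsT : s ⊆ T) (h : IsConnected s) :
    IsConnected (Subtype.val ⁻¹' s : Set T) := by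
  obtain ⟨⟨x, hx⟩, hp⟩ := h
  refine ⟨⟨⟨x, hsT hx⟩, hx⟩, ?_⟩
  have himg : Subtype.val '' (Subtype.val ⁻¹' s : Set T) = s := by
    rw [Subtype.image_preimage_coe, inter_eq_self_of_subset_right hsT]
  exact Topology.IsInducing.subtypeVal.isPreconnected_image.mp (by rwa [himg])

/-- Transfer connectedness from the subtype preimage down to the ambient subset. -/
lemma isConnected_of_preim {T s : Set X} (hsT : s ⊆ T)
    (h : IsConnected (Subtype.val ⁻¹' s : Set T)) : IsConnected s := by
  obtain ⟨⟨x, hx⟩, hp⟩ := h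
  refine ⟨⟨x, hx⟩, ?_⟩
  have himg : Subtype.val '' (Subtype.val ⁻¹' s : Set T) = s := by
    rw [Subtype.image_preimage_coe, inter_eq_self_of_subset_right hsT]
  have := Topology.IsInducing.subtypeVal.isPreconnected_image.mpr hp
  rwa [himg] at this

/-- Unfold the portliness of `V` inside the open subspace `U` into three ambient
statements about `X`. -/
lemma portly_spec {U V : Set X} (hU : IsOpen U) (hVU : V ⊆ U)
    (h : Portly U (Subtype.val ⁻¹' V)) :
    IsOpen V ∧ (∀ O, IsOpen O → O ⊆ U → O.Nonempty → (O ∩ V).Nonempty) ∧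
      (∀ C, IsOpen C → C ⊆ U → IsConnected C → IsConnected (C ∩ V)) := by
  obtain ⟨ho, hd, hc⟩ := h
  refine ⟨?_, ?_, ?_⟩
  · have := hU.isOpenEmbedding_subtypeVal.isOpenMap _ ho
    rwa [Subtype.image_preimage_coe, inter_eq_self_of_subset_right hVU] at this
  · rintro O hO hOU ⟨x, hx⟩
    obtain ⟨y, hyO, hyV⟩ := hd.inter_open_nonempty _
      (hO.preimage continuous_subtype_val) ⟨⟨x, hOU hx⟩, hx⟩
    exact ⟨(y : X), hyO, hyV⟩
  · intro C hC hCU hCc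
    have h1 : IsConnected (Subtype.val ⁻¹' C : Set U) := isConnected_preim hCU hCc
    have h2 := hc _ (hC.preimage continuous_subtype_val) h1
    rw [← preimage_inter] at h2
    exact isConnected_of_preim (inter_subset_left.trans hCU) h2

/-- Core ambient lemma: the union of a locally portly family meets every open
connected subset of `⋃ i, U i` in a connected set. -/
lemma key_conn [LocallyConnectedSpace X] {ι : Type*} (U V : ι → Set X)
    (hUopen : ∀ i, IsOpen (U i)) (_hVU : ∀ i, V i ⊆ U i)
    (hdense : ∀ i, ∀ O, IsOpen O → O ⊆ U i → O.Nonempty → (O ∩ V i).Nonempty)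
    (hconn : ∀ i, ∀ C, IsOpen C → C ⊆ U i → IsConnected C → IsConnected (C ∩ V i))
    {W : Set X} (hW : IsOpen W) (hWc : IsConnected W) (hWT : W ⊆ ⋃ i, U i) :
    IsConnected (W ∩ ⋃ i, V i) := by
  have loc : ∀ x ∈ W, ∃ i C, IsOpen C ∧ x ∈ C ∧ C ⊆ W ∩ U i ∧
      IsConnected (C ∩ V i) ∧ x ∈ closure (C ∩ V i) ∧
      (∀ O, IsOpen O → O ⊆ C → O.Nonempty → (O ∩ V i).Nonempty) := by
    intro x hx
    obtain ⟨i, hxi⟩ := mem_iUnion.mp (hWT hx)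
    set C := connectedComponentIn (W ∩ U i) x with hCdef
    have hxC : x ∈ C := mem_connectedComponentIn ⟨hx, hxi⟩
    have hCo : IsOpen C := (hW.inter (hUopen i)).connectedComponentIn
    have hCsub : C ⊆ W ∩ U i := connectedComponentIn_subset _ _
    have hCc : IsConnected C := isConnected_connectedComponentIn_iff.mpr ⟨hx, hxi⟩
    have hCU : C ⊆ U i := hCsub.trans inter_subset_right
    have hden : ∀ O, IsOpen O → O ⊆ C → O.Nonempty → (O ∩ V i).Nonempty :=
      fun O hO hOC hOne => hdense i O hO (hOC.trans hCU) hOne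
    have hcl : x ∈ closure (C ∩ V i) := by
      rw [mem_closure_iff]
      intro o ho hxo
      obtain ⟨y, hy⟩ := hden (o ∩ C) (ho.inter hCo) inter_subset_right ⟨x, hxo, hxC⟩
      exact ⟨y, hy.1.1, hy.1.2, hy.2⟩
    exact ⟨i, C, hCo, hxC, hCsub, hconn i C hCo hCU hCc, hcl, hden⟩
  set S := W ∩ ⋃ i, V i with hS
  have hSW : S ⊆ W := inter_subset_left
  have hsubS : ∀ i C, C ⊆ W ∩ U i → C ∩ V i ⊆ S := by
    intro i C hC y hy
    exact ⟨(hC hy.1).1, mem_iUnion.mpr ⟨i, hy.2⟩⟩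
  constructor
  · obtain ⟨x, hx⟩ := hWc.nonempty
    obtain ⟨i, C, _, _, hCsub, hCVc, _, _⟩ := loc x hx
    obtain ⟨y, hy⟩ := hCVc.nonempty
    exact ⟨y, hsubS i C hCsub hy⟩
  · intro u v hu hv hcov hSu hSv
    obtain ⟨x, hxW, hxu, hxv⟩ :
        (W ∩ (closure (S ∩ u) ∩ closure (S ∩ v))).Nonempty := by
      refine isPreconnected_closed_iff.mp hWc.isPreconnected (closure (S ∩ u))
        (closure (S ∩ v)) isClosed_closure isClosed_closure ?_ ?_ ?_
      · intro x hx
        obtain ⟨i, C, _, _, hCsub, _, hcl, _⟩ := loc x hx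
        have h1 : C ∩ V i ⊆ S ∩ u ∪ S ∩ v := by
          intro y hy
          have hyS := hsubS i C hCsub hy
          rcases hcov hyS with h | h
          · exact Or.inl ⟨hyS, h⟩
          · exact Or.inr ⟨hyS, h⟩
        have := closure_mono h1 hcl
        rwa [closure_union] at this
      · obtain ⟨y, hy⟩ := hSu
        exact ⟨y, hSW hy.1, subset_closure hy⟩
      · obtain ⟨y, hy⟩ := hSv
        exact ⟨y, hSW hy.1, subset_closure hy⟩
    obtain ⟨i, C, hCo, hxC, hCsub, hCVc, _, hden⟩ := loc x hxW
    have hCu : ((C ∩ V i) ∩ u).Nonempty := by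
      obtain ⟨y, hyC, _, hyu⟩ := mem_closure_iff.mp hxu C hCo hxC
      obtain ⟨z, ⟨hz1, hz2⟩, hz3⟩ :=
        hden (C ∩ u) (hCo.inter hu) inter_subset_left ⟨y, hyC, hyu⟩
      exact ⟨z, ⟨hz1, hz3⟩, hz2⟩
    have hCv : ((C ∩ V i) ∩ v).Nonempty := by
      obtain ⟨y, hyC, _, hyv⟩ := mem_closure_iff.mp hxv C hCo hxC
      obtain ⟨z, ⟨hz1, hz2⟩, hz3⟩ :=
        hden (C ∩ v) (hCo.inter hv) inter_subset_left ⟨y, hyC, hyv⟩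
      exact ⟨z, ⟨hz1, hz3⟩, hz2⟩
    have := hCVc.isPreconnected u v hu hv
      (fun y hy => hcov (hsubS i C hCsub hy)) hCu hCv
    exact this.imp fun y hy => ⟨hsubS i C hCsub hy.1, hy.2⟩

end aux

theorem stmt4 {X : Type*} [TopologicalSpace X] [T2Space X] [LocallyConnectedSpace X]
    {ι : Type*} (U V : ι → Set X) (hUopen : ∀ i, IsOpen (U i)) (hVU : ∀ i, V i ⊆ U i)
    (hport : ∀ i, Portly (U i) (Subtype.val ⁻¹' V i)) :
    Portly (⋃ i, U i) (Subtype.val ⁻¹' ⋃ i, V i) := by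
  have spec := fun i => portly_spec (hUopen i) (hVU i) (hport i)
  have hVopen : ∀ i, IsOpen (V i) := fun i => (spec i).1
  have hT : IsOpen (⋃ i, U i) := isOpen_iUnion hUopen
  refine ⟨(isOpen_iUnion hVopen).preimage continuous_subtype_val, ?_, ?_⟩
  · rw [dense_iff_inter_open]
    intro O' hO' hO'ne
    obtain ⟨O, hOopen, rfl⟩ := isOpen_induced_iff.mp hO'
    obtain ⟨⟨x, hxT⟩, hxO⟩ := hO'ne
    obtain ⟨i, hxi⟩ := mem_iUnion.mp hxT
    obtain ⟨y, ⟨hyO, hyU⟩, hyV⟩ := (spec i).2.1 (O ∩ U i)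
      (hOopen.inter (hUopen i)) inter_subset_right ⟨x, hxO, hxi⟩
    exact ⟨⟨y, mem_iUnion.mpr ⟨i, hyU⟩⟩, hyO, mem_iUnion.mpr ⟨i, hyV⟩⟩
  · intro W hWo hWc
    have hW'open : IsOpen (Subtype.val '' W) := hT.isOpenEmbedding_subtypeVal.isOpenMap _ hWo
    have hW'c : IsConnected (Subtype.val '' W) :=
      ⟨hWc.nonempty.image _, Topology.IsInducing.subtypeVal.isPreconnected_image.mpr
        hWc.isPreconnected⟩
    have hW'T : (Subtype.val '' W) ⊆ ⋃ i, U i := by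
      rintro _ ⟨y, _, rfl⟩; exact y.2
    have hkey := key_conn U V hUopen hVU (fun i => (spec i).2.1) (fun i => (spec i).2.2)
      hW'open hW'c hW'T
    have heq : W ∩ (Subtype.val ⁻¹' ⋃ i, V i) =
        Subtype.val ⁻¹' (Subtype.val '' W ∩ ⋃ i, V i) := by
      rw [preimage_inter, preimage_image_eq _ Subtype.val_injective]
    rw [heq]
    exact isConnected_preim (inter_subset_left.trans hW'T) hkey
end

section
/- Let X be a connected, first countable, locally path connected, Hausdorff topological space and let U ⊆ X be a portly subset (open, dense, locally connected in X). Then for all a ∈ U and b ∈ X there exists a path γ : [0,1] → X from a to b with γ([0,1)) ⊆ U. -/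
/-!
Take a decreasing basis `W n` of open path-connected neighbourhoods of `b`. Portliness makes
`U` and every `W n ∩ U` path connected, so there is a chain of paths `a ⇝ x₀ ⇝ x₁ ⇝ ⋯` in `U`
with `x n ∈ W n ∩ U` and the link `x n ⇝ x (n + 1)` inside `W n ∩ U`. Running the links one
after another on the intervals `[k, k + 1]` gives a map `[0, ∞) → U` which tends to `b`, since
the links shrink into the basis; reparametrising `[0, 1)` onto `[0, ∞)` by `t ↦ t / (1 - t)`
and sending `1` to `b` yields the path.
-/

open Set Filter Topology unitInterval

theorem tendsto_div_one_sub_nhdsLT_one :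
    Tendsto (fun t : ℝ => t / (1 - t)) (𝓝[<] 1) atTop := by
  have h : Tendsto (fun t : ℝ => 1 - t) (𝓝[<] 1) (𝓝[>] 0) := by
    refine tendsto_nhdsWithin_of_tendsto_nhds_of_eventually_within _ ?_ ?_
    · exact ((continuous_sub_left (1 : ℝ)).tendsto' 1 0 (sub_self 1)).mono_left
        nhdsWithin_le_nhds
    · filter_upwards [self_mem_nhdsWithin] with t (ht : t < 1) using sub_pos.2 ht
  refine ((tendsto_inv_nhdsGT_zero.comp h).atTop_add
    (tendsto_const_nhds (x := (-1 : ℝ)))).congr' ?_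
  filter_upwards [self_mem_nhdsWithin] with t (ht : t < 1)
  have : 1 - t ≠ 0 := (sub_pos.2 ht).ne'
  simp only [Function.comp_apply]
  field_simp
  ring

section

variable {X : Type*} [TopologicalSpace X]

theorem ContinuousMap.exists_concat_int (p : ℤ → C(I, X))
    (hp : ∀ n, p n 1 = p (n + 1) 0) :
    ∃ H : C(ℝ, X), ∀ (n : ℤ) (t : I), H (n + t) = p n t := by
  let H : ℝ → X := fun s => p ⌊s⌋ ⟨Int.fract s, Int.fract_nonneg s, (Int.fract_lt_one s).le⟩
  have hpiece (n : ℤ) :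
      EqOn H (fun s => p n (projIcc 0 1 zero_le_one (s - n))) (Icc n (n + 1)) := by
    intro s ⟨hns, hsn⟩
    rcases hsn.lt_or_eq with hlt | rfl
    · have hfl : ⌊s⌋ = n := Int.floor_eq_iff.2 ⟨hns, hlt⟩
      simp only [H, hfl]
      congr 1
      rw [projIcc_of_mem _ ⟨sub_nonneg.2 hns, by linarith⟩]
      simp [Int.fract, hfl]
    · have hfl : ⌊(n : ℝ) + 1⌋ = n + 1 := by exact_mod_cast Int.floor_intCast (n + 1)
      simp only [H, hfl, add_sub_cancel_left, projIcc_right]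
      rw [show (⟨1, _⟩ : I) = 1 from rfl, hp]
      congr 1
      exact Subtype.ext (by simp [Int.fract, hfl])
  refine ⟨⟨H, ?_⟩, fun n t => ?_⟩
  · refine LocallyFinite.continuous (f := fun n : ℤ => Icc (n : ℝ) (n + 1)) ?_
      (iUnion_Icc_intCast ℝ) (fun _ => isClosed_Icc) fun n => ?_
    · exact locallyFinite_Icc_of_tendsto tendsto_intCast_atTop_atTop
        (tendsto_atBot_add_const_right _ _ (tendsto_intCast_atBot_iff.2 tendsto_id))
    · exact ((p n).continuous.comp (continuous_projIcc.comp
        (continuous_id.sub continuous_const))).continuousOn.congr (hpiece n)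
  · have := hpiece n ⟨le_add_of_nonneg_right t.2.1, by simpa using t.2.2⟩
    simp only [ContinuousMap.coe_mk, this, add_sub_cancel_left, projIcc_val]

theorem exists_path_of_tendsto_atTop (H : C(ℝ, X)) {a b : X} (h0 : H 0 = a)
    (hH : Tendsto H atTop (𝓝 b)) : ∃ γ : Path a b, ∀ t : I, t ≠ 1 → γ t ∈ H '' Ici 0 := by
  let G : ℝ → X := fun t => if t < 1 then H (t / (1 - t)) else b
  have hG_lt : ∀ᶠ t in 𝓝[<] 1, G t = H (t / (1 - t)) :=
    eventually_nhdsWithin_of_forall fun t (ht : t < 1) => if_pos ht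
  have hG_ge : ∀ᶠ t in 𝓝[≥] 1, G t = b :=
    eventually_nhdsWithin_of_forall fun t (ht : 1 ≤ t) => if_neg ht.not_gt
  have hG : Continuous G := by
    refine continuous_iff_continuousAt.2 fun t => ?_
    rcases lt_trichotomy t 1 with ht | rfl | ht
    · refine (H.continuous.continuousAt.comp (continuousAt_id.div
        (continuousAt_const.sub continuousAt_id) (sub_pos.2 ht).ne')).congr ?_
      filter_upwards [Iio_mem_nhds ht] with s (hs : s < 1) using (if_pos hs).symm
    · rw [ContinuousAt, ← nhdsLT_sup_nhdsGE, tendsto_sup,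
        show G 1 = b from if_neg (lt_irrefl 1)]
      exact ⟨(hH.comp tendsto_div_one_sub_nhdsLT_one).congr' (hG_lt.mono fun _ h => h.symm),
        tendsto_const_nhds.congr' (hG_ge.mono fun _ h => h.symm)⟩
    · refine (continuousAt_const (y := b)).congr ?_
      filter_upwards [Ioi_mem_nhds ht] with s (hs : 1 < s) using (if_neg hs.not_gt).symm
  refine ⟨⟨⟨fun t => G t, hG.comp continuous_subtype_val⟩, by simp [G, h0], by simp [G]⟩,
    fun t ht => ?_⟩
  have ht1 : (t : ℝ) < 1 := lt_of_le_of_ne t.2.2 (fun h => ht (Subtype.ext h))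
  exact ⟨t / (1 - t), div_nonneg t.2.1 (sub_pos.2 ht1).le, (if_pos ht1).symm⟩

theorem exists_path_of_joinedIn_of_tendsto_smallSets {x : ℕ → X} {S : ℕ → Set X} {b : X}
    (hx : ∀ n, JoinedIn (S n) (x n) (x (n + 1))) (hS : Tendsto S atTop (𝓝 b).smallSets) :
    ∃ γ : Path (x 0) b, ∀ t : I, t ≠ 1 → γ t ∈ ⋃ n, S n := by
  let p : ℤ → C(I, X) := fun n =>
    if n < 0 then ContinuousMap.const I (x 0) else (hx n.toNat).somePath.toContinuousMap
  have hp : ∀ n, p n 1 = p (n + 1) 0 := by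
    intro n
    rcases lt_trichotomy n (-1) with hn | rfl | hn
    · simp [p, show n < 0 by omega, show n + 1 < 0 by omega]
    · simp [p]
    · simp [p, show ¬ n < 0 by omega, show ¬ n + 1 < 0 by omega,
        show (n + 1).toNat = n.toNat + 1 by omega]
  obtain ⟨H, hH⟩ := ContinuousMap.exists_concat_int p hp
  have hHS : ∀ s : ℝ, 0 ≤ s → H s ∈ S ⌊s⌋₊ := by
    intro s hs
    have := hH ⌊s⌋₊ ⟨s - ⌊s⌋₊, sub_nonneg.2 (Nat.floor_le hs),
      by linarith [Nat.lt_floor_add_one s]⟩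
    simp only [Int.cast_natCast, add_sub_cancel] at this
    rw [this]
    simp only [p, if_neg (Int.natCast_nonneg _).not_gt, Int.toNat_natCast]
    exact (hx ⌊s⌋₊).somePath_mem _
  have hH0 : H 0 = x 0 := by simpa [p] using hH 0 0
  have hHb : Tendsto H atTop (𝓝 b) := fun N hN => mem_map.2 <| by
    filter_upwards [tendsto_nat_floor_atTop.eventually (tendsto_smallSets_iff.1 hS N hN),
      eventually_ge_atTop (0 : ℝ)] with s hsN hs using hsN (hHS s hs)
  obtain ⟨γ, hγ⟩ := exists_path_of_tendsto_atTop H hH0 hHb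
  refine ⟨γ, fun t ht => ?_⟩
  obtain ⟨s, hs, hγs⟩ := hγ t ht
  exact mem_iUnion.2 ⟨_, hγs ▸ hHS s hs⟩

theorem exists_path_of_antitone_of_tendsto_smallSets {S : ℕ → Set X} {a b : X}
    (hS : ∀ n, IsPathConnected (S n)) (hanti : Antitone S)
    (hSb : Tendsto S atTop (𝓝 b).smallSets) (ha : a ∈ S 0) :
    ∃ γ : Path a b, ∀ t : I, t ≠ 1 → γ t ∈ S 0 := by
  choose y hy using fun n => (hS (n + 1)).nonempty
  let x : ℕ → X := fun | 0 => a | n + 1 => y n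
  have hxS : ∀ n, x n ∈ S n := by
    rintro (_ | n)
    exacts [ha, hy n]
  obtain ⟨γ, hγ⟩ := exists_path_of_joinedIn_of_tendsto_smallSets
    (fun n => (hS n).joinedIn _ (hxS n) _ (hanti n.le_succ (hxS (n + 1)))) hSb
  refine ⟨γ, fun t ht => ?_⟩
  obtain ⟨n, hn⟩ := mem_iUnion.1 (hγ t ht)
  exact hanti n.zero_le hn

end

theorem Portly.isPathConnected_inter {X : Type*} [TopologicalSpace X] [LocallyPathConnectedSpace X]
    {U W : Set X} (hU : Portly X U) (hW : IsOpen W) (hWc : IsConnected W) :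
    IsPathConnected (W ∩ U) :=
  (hW.inter hU.1).isConnected_iff_isPathConnected.1 (hU.2.2 W hW hWc)

theorem stmt6_general {X : Type*} [TopologicalSpace X] [ConnectedSpace X]
    [FirstCountableTopology X] [LocallyPathConnectedSpace X]
    (U : Set X) (hU : Portly X U) (a : X) (ha : a ∈ U) (b : X) :
    ∃ γ : Path a b, ∀ t : unitInterval, t ≠ 1 → γ t ∈ U := by
  obtain ⟨W, hW, hWb⟩ := (isOpen_isPathConnected_basis b).exists_antitone_subbasis
  let S : ℕ → Set X := fun | 0 => U | n + 1 => W n ∩ U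
  have hS : ∀ n, IsPathConnected (S n) := by
    rintro (_ | n)
    · simpa using hU.isPathConnected_inter isOpen_univ isConnected_univ
    · exact hU.isPathConnected_inter (hW n).1 (hW n).2.2.isConnected
  have hanti : Antitone S := by
    refine antitone_nat_of_succ_le ?_
    rintro (_ | n)
    exacts [inter_subset_right, inter_subset_inter_left _ (hWb.antitone n.le_succ)]
  have hSb : Tendsto S atTop (𝓝 b).smallSets :=
    (tendsto_add_atTop_iff_nat 1).1 <|
      hWb.tendsto_smallSets.smallSets_mono (Eventually.of_forall fun _ => inter_subset_left)
  exact exists_path_of_antitone_of_tendsto_smallSets hS hanti hSb ha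

theorem stmt6 {X : Type*} [TopologicalSpace X] [ConnectedSpace X]
    [FirstCountableTopology X] [LocallyPathConnectedSpace X] [T2Space X]
    (U : Set X) (hU : Portly X U) (a : X) (ha : a ∈ U) (b : X) :
    ∃ γ : Path a b, ∀ t : unitInterval, t ≠ 1 → γ t ∈ U :=
  stmt6_general U hU a ha b
end

section
/- Let p : X → Y be a complete spread with Y Hausdorff, b ∈ Y, and let 𝒰 be a basis of connected open neighborhoods of b. For U ∈ 𝒰 let X_U be the discrete space of connected components of p⁻¹(U), with bonding maps X_U → X_V (for U ⊆ V) sending a component to the component of p⁻¹(V) containing it. Then the fiber p⁻¹(b) with the subspace topology is homeomorphic to the inverse limit of the system (X_U). -/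
/-- `V` is a connected component of `S`. -/
def IsComponentOf {X : Type*} [TopologicalSpace X] (V S : Set X) : Prop :=
  ∃ x ∈ S, V = connectedComponentIn S x

/-- A *spread* is a continuous map such that the connected components of preimages of
open subsets of the base form a basis for the topology of the total space. -/
def IsSpread {X Y : Type*} [TopologicalSpace X] [TopologicalSpace Y] (p : X → Y) : Prop :=
  Continuous p ∧ TopologicalSpace.IsTopologicalBasis
    {V : Set X | ∃ U : Set Y, IsOpen U ∧ IsComponentOf V (p ⁻¹' U)}

/-- `p` maps `V` homeomorphically onto `U`. -/
def MapsHomeomorphicallyOnto {X Y : Type*} [TopologicalSpace X] [TopologicalSpace Y]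
    (p : X → Y) (V : Set X) (U : Set Y) : Prop :=
  ∃ h : V ≃ₜ U, ∀ v : V, (h v : Y) = p v

/-- The ordinary locus in the base of a spread: points admitting an open neighborhood
evenly covered by `p`. -/
def OrdBase {X Y : Type*} [TopologicalSpace X] [TopologicalSpace Y] (p : X → Y) : Set Y :=
  {y | ∃ U : Set Y, IsOpen U ∧ y ∈ U ∧
    ∀ V : Set X, IsComponentOf V (p ⁻¹' U) → MapsHomeomorphicallyOnto p V U}

/-- The ordinary locus in the total space of a spread. -/
def OrdTotal {X Y : Type*} [TopologicalSpace X] [TopologicalSpace Y] (p : X → Y) : Set X :=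
  p ⁻¹' OrdBase p

/-- A *complete* spread: every monotone choice of connected components of preimages of
connected open neighborhoods of a point of the closure of the image has nonempty
intersection. -/
def IsCompleteSpread {X Y : Type*} [TopologicalSpace X] [TopologicalSpace Y]
    (p : X → Y) : Prop :=
  IsSpread p ∧ ∀ y ∈ closure (Set.range p),
    ∀ χ : {U : Set Y // IsOpen U ∧ IsConnected U ∧ y ∈ U} → Set X,
      (∀ U, IsComponentOf (χ U) (p ⁻¹' U.1)) →
      (∀ U V, U.1 ⊆ V.1 → χ U ⊆ χ V) →
      (⋂ U, χ U).Nonempty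

/-- A *branched covering* is a complete surjective spread between connected spaces whose
ordinary loci are portly. -/
def IsBranchedCovering {X Y : Type*} [TopologicalSpace X] [TopologicalSpace Y]
    (p : X → Y) : Prop :=
  IsCompleteSpread p ∧ Function.Surjective p ∧ ConnectedSpace X ∧ ConnectedSpace Y ∧
    Portly X (OrdTotal p) ∧ Portly Y (OrdBase p)

theorem stmt9 {X Y : Type*} [TopologicalSpace X] [TopologicalSpace Y]
    [T2Space X] [T2Space Y] [LocallyConnectedSpace X] [LocallyConnectedSpace Y]
    (p : X → Y) (hp : IsCompleteSpread p) (b : Y) (𝒰 : Set (Set Y))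
    (h𝒰 : ∀ U ∈ 𝒰, IsOpen U ∧ IsConnected U ∧ b ∈ U)
    (hbasis : ∀ W ∈ nhds b, ∃ U ∈ 𝒰, U ⊆ W) :
    letI : TopologicalSpace (Set X) := ⊥
    ∃ h : (p ⁻¹' {b}) ≃ₜ
        {χ : 𝒰 → Set X // (∀ U : 𝒰, IsComponentOf (χ U) (p ⁻¹' U.1)) ∧
          ∀ U V : 𝒰, U.1 ⊆ V.1 → χ U ⊆ χ V},
      ∀ (x : (p ⁻¹' {b} : Set X)) (U : 𝒰),
        (h x).1 U = connectedComponentIn (p ⁻¹' U.1) x.1 := by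
  letI : TopologicalSpace (Set X) := ⊥
  haveI : DiscreteTopology (Set X) := ⟨rfl⟩
  obtain ⟨⟨hpc, hpb⟩, hcomp⟩ := hp
  have hfib : ∀ x : (p ⁻¹' {b} : Set X), p x.1 = b := fun x => x.2
  have hmem : ∀ (x : X), p x = b → ∀ U : 𝒰, x ∈ p ⁻¹' U.1 := by
    intro x hx U
    simp only [Set.mem_preimage, hx]
    exact (h𝒰 U.1 U.2).2.2
  -- the components over 𝒰 form a neighborhood basis at each point of the fiber
  have hnb : ∀ (x : X), p x = b → ∀ O : Set X, IsOpen O → x ∈ O →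
      ∃ U : 𝒰, connectedComponentIn (p ⁻¹' U.1) x ⊆ O := by
    intro x hx O hO hxO
    obtain ⟨V, ⟨W, hW, hVW⟩, hxV, hVO⟩ := hpb.exists_subset_of_mem_open hxO hO
    obtain ⟨x', hx', rfl⟩ := hVW
    have hxW : x ∈ p ⁻¹' W := connectedComponentIn_subset _ _ hxV
    have hVx : connectedComponentIn (p ⁻¹' W) x' = connectedComponentIn (p ⁻¹' W) x :=
      connectedComponentIn_eq hxV
    have hbW : b ∈ W := by rw [← hx]; exact hxW
    obtain ⟨U, hU𝒰, hUW⟩ := hbasis W (hW.mem_nhds hbW)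
    exact ⟨⟨U, hU𝒰⟩,
      (connectedComponentIn_mono x (Set.preimage_mono hUW)).trans (hVx ▸ hVO)⟩
  -- the map
  let f : (p ⁻¹' {b} : Set X) →
      {χ : 𝒰 → Set X // (∀ U : 𝒰, IsComponentOf (χ U) (p ⁻¹' U.1)) ∧
        ∀ U V : 𝒰, U.1 ⊆ V.1 → χ U ⊆ χ V} :=
    fun x => ⟨fun U => connectedComponentIn (p ⁻¹' U.1) x.1,
      fun U => ⟨x.1, hmem x.1 (hfib x) U, rfl⟩,
      fun U V hUV => connectedComponentIn_mono x.1 (Set.preimage_mono hUV)⟩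
  have hinj : Function.Injective f := by
    intro x y hxy
    apply Subtype.ext
    by_contra hne
    obtain ⟨U, hsub⟩ := hnb x.1 (hfib x) {y.1}ᶜ isOpen_compl_singleton
      (by simpa using hne)
    have heq : connectedComponentIn (p ⁻¹' U.1) x.1
        = connectedComponentIn (p ⁻¹' U.1) y.1 := congrFun (congrArg Subtype.val hxy) U
    have : y.1 ∈ connectedComponentIn (p ⁻¹' U.1) x.1 := by
      rw [heq]; exact mem_connectedComponentIn (hmem y.1 (hfib y) U)
    exact hsub this rfl
  have hsurj : Function.Surjective f := by
    rintro ⟨χ, hχ1, hχ2⟩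
    have hχne : ∀ U : 𝒰, ∃ z, z ∈ χ U ∧ z ∈ p ⁻¹' U.1 := by
      intro U
      obtain ⟨z, hz, hc⟩ := hχ1 U
      exact ⟨z, hc ▸ mem_connectedComponentIn hz, hz⟩
    have hpre : ∀ U : 𝒰, IsPreconnected (χ U) := by
      intro U
      obtain ⟨z, hz, hc⟩ := hχ1 U
      rw [hc]; exact isPreconnected_connectedComponentIn
    have hχsub : ∀ U : 𝒰, χ U ⊆ p ⁻¹' U.1 := by
      intro U
      obtain ⟨z, hz, hc⟩ := hχ1 U
      rw [hc]; exact connectedComponentIn_subset _ _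
    have hbcl : b ∈ closure (Set.range p) := by
      rw [mem_closure_iff]
      intro O hO hbO
      obtain ⟨U, hU, hUO⟩ := hbasis O (hO.mem_nhds hbO)
      obtain ⟨z, _, hz⟩ := hχne ⟨U, hU⟩
      exact ⟨p z, hUO hz, Set.mem_range_self z⟩
    have hchoose : ∀ V : {U : Set Y // IsOpen U ∧ IsConnected U ∧ b ∈ U},
        ∃ U : 𝒰, U.1 ⊆ V.1 := by
      intro V
      obtain ⟨U, hU, hUV⟩ := hbasis V.1 (V.2.1.mem_nhds V.2.2.2)
      exact ⟨⟨U, hU⟩, hUV⟩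
    choose sel hsel using hchoose
    choose pt hpt1 hpt2 using fun V => hχne (sel V)
    -- independence of the extension on choices
    have hind : ∀ V : {U : Set Y // IsOpen U ∧ IsConnected U ∧ b ∈ U},
        ∀ (U : 𝒰) (z : X), U.1 ⊆ V.1 → z ∈ χ U →
        connectedComponentIn (p ⁻¹' V.1) z = connectedComponentIn (p ⁻¹' V.1) (pt V) := by
      intro V U z hUV hz
      have hU' := h𝒰 U.1 U.2
      have hS' := h𝒰 (sel V).1 (sel V).2
      obtain ⟨W, hW, hWsub⟩ := hbasis (U.1 ∩ (sel V).1)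
        (Filter.inter_mem (hU'.1.mem_nhds hU'.2.2) (hS'.1.mem_nhds hS'.2.2))
      obtain ⟨w, hw, _⟩ := hχne ⟨W, hW⟩
      have hwU : w ∈ χ U := hχ2 ⟨W, hW⟩ U (fun a ha => (hWsub ha).1) hw
      have hwS : w ∈ χ (sel V) := hχ2 ⟨W, hW⟩ (sel V) (fun a ha => (hWsub ha).2) hw
      have hUV' : χ U ⊆ p ⁻¹' V.1 := (hχsub U).trans (Set.preimage_mono hUV)
      have hSV' : χ (sel V) ⊆ p ⁻¹' V.1 := (hχsub (sel V)).trans (Set.preimage_mono (hsel V))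
      have h1 : w ∈ connectedComponentIn (p ⁻¹' V.1) z :=
        (hpre U).subset_connectedComponentIn hz hUV' hwU
      have h2 : w ∈ connectedComponentIn (p ⁻¹' V.1) (pt V) :=
        (hpre (sel V)).subset_connectedComponentIn (hpt1 V) hSV' hwS
      rw [connectedComponentIn_eq h1, connectedComponentIn_eq h2]
    set χ' : {U : Set Y // IsOpen U ∧ IsConnected U ∧ b ∈ U} → Set X :=
      fun V => connectedComponentIn (p ⁻¹' V.1) (pt V) with hχ'def
    have hcomp1 : ∀ V, IsComponentOf (χ' V) (p ⁻¹' V.1) :=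
      fun V => ⟨pt V, Set.mem_of_mem_of_subset (hpt2 V) (Set.preimage_mono (hsel V)), rfl⟩
    have hmono : ∀ V V', V.1 ⊆ V'.1 → χ' V ⊆ χ' V' := by
      intro V V' hVV'
      have h1 : χ' V' = connectedComponentIn (p ⁻¹' V'.1) (pt V) :=
        (hind V' (sel V) (pt V) ((hsel V).trans hVV') (hpt1 V)).symm
      exact (connectedComponentIn_mono _ (Set.preimage_mono hVV')).trans
        (hind V' (sel V) (pt V) ((hsel V).trans hVV') (hpt1 V)).le
    obtain ⟨x, hx⟩ := hcomp b hbcl χ' hcomp1 hmono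
    simp only [Set.mem_iInter] at hx
    have hpx : p x = b := by
      by_contra hne
      obtain ⟨U, hU, hUsub⟩ := hbasis {p x}ᶜ
        (isOpen_compl_singleton.mem_nhds (by simpa using Ne.symm hne))
      have hU' := h𝒰 U hU
      have hxU := hx ⟨U, hU'.1, hU'.2.1, hU'.2.2⟩
      have : x ∈ p ⁻¹' U := connectedComponentIn_subset _ _ hxU
      exact hUsub this rfl
    refine ⟨⟨x, hpx⟩, ?_⟩
    apply Subtype.ext
    funext U
    show connectedComponentIn (p ⁻¹' U.1) x = χ U
    have hU' := h𝒰 U.1 U.2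
    set V : {U : Set Y // IsOpen U ∧ IsConnected U ∧ b ∈ U} :=
      ⟨U.1, hU'.1, hU'.2.1, hU'.2.2⟩ with hVdef
    have hxV : x ∈ connectedComponentIn (p ⁻¹' U.1) (pt V) := hx V
    have hptU : pt V ∈ χ U := hχ2 (sel V) U (hsel V) (hpt1 V)
    have hχU : χ U = connectedComponentIn (p ⁻¹' U.1) (pt V) := by
      obtain ⟨x0, hx0, hc⟩ := hχ1 U
      rw [hc]
      exact connectedComponentIn_eq (hc ▸ hptU)
    rw [hχU]
    exact (connectedComponentIn_eq hxV).symm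
  have hcont : Continuous f := by
    apply Continuous.subtype_mk
    apply continuous_pi
    intro U
    apply IsLocallyConstant.continuous
    rw [IsLocallyConstant.iff_exists_open]
    intro x
    refine ⟨Subtype.val ⁻¹' connectedComponentIn (p ⁻¹' U.1) x.1,
      (((h𝒰 U.1 U.2).1.preimage hpc).connectedComponentIn).preimage continuous_subtype_val,
      mem_connectedComponentIn (hmem x.1 (hfib x) U), ?_⟩
    intro y hy
    exact (connectedComponentIn_eq hy).symm
  have hopen : IsOpenMap f := by
    intro W hW
    obtain ⟨O, hO, hWO⟩ := isOpen_induced_iff.mp hW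
    rw [isOpen_iff_forall_mem_open]
    rintro χ ⟨x, hxW, rfl⟩
    have hxO : x.1 ∈ O := by rw [← hWO] at hxW; exact hxW
    obtain ⟨U, hsub⟩ := hnb x.1 (hfib x) O hO hxO
    refine ⟨{χ' | χ'.1 U = connectedComponentIn (p ⁻¹' U.1) x.1}, ?_, ?_, rfl⟩
    · rintro χ' (hχ' : χ'.1 U = _)
      obtain ⟨y, rfl⟩ := hsurj χ'
      have hy : connectedComponentIn (p ⁻¹' U.1) y.1
          = connectedComponentIn (p ⁻¹' U.1) x.1 := hχ'
      have hyO : y.1 ∈ O := hsub (hy ▸ mem_connectedComponentIn (hmem y.1 (hfib y) U))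
      exact ⟨y, by rw [← hWO]; exact hyO, rfl⟩
    · show IsOpen (((fun g : 𝒰 → Set X => g U) ∘ Subtype.val) ⁻¹'
        {connectedComponentIn (p ⁻¹' U.1) x.1})
      exact (isOpen_discrete _).preimage
        ((continuous_apply U).comp continuous_subtype_val)
  exact ⟨Equiv.toHomeomorphOfContinuousOpen
      (Equiv.ofBijective f ⟨hinj, hsurj⟩) hcont hopen,
    fun x U => rfl⟩
end

section
/- Let p : X → Y be a branched covering. Then for every open connected subset U ⊆ Y and every connected component V of p⁻¹(U), one has p(V) = U. In particular, p is an open map. -/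
/-!
Let `C` be a component of `p⁻¹ W` with `W` open and connected. Near an ordinary point the
sheets of `p` lift connected sets, so `p '' C` is locally either everything or nothing
there; as the ordinary part of `W` is connected and `C` contains ordinary points,
`p '' C` contains it, and in particular is dense in `W`. For an arbitrary `y ∈ W`, take a
countable decreasing basis `W n` of connected open neighbourhoods of `y`; density lets us
pick nested components of the `p⁻¹ (W n)` inside `C`, and completeness of the spread
yields a point of `C` over `y`. Openness of `p` follows because the components of
preimages of open sets form a basis of `X`.
-/

open Set Filter Topology

section

variable {X Y : Type*} [TopologicalSpace X] [TopologicalSpace Y] {p : X → Y}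

lemma mem_connectedComponentIn_of_le {F : ℕ → Set X} (hF : Antitone F) {z : ℕ → X}
    (hz : ∀ n, z (n + 1) ∈ connectedComponentIn (F n) (z n)) {k : ℕ} (hk : z k ∈ F k) :
    ∀ m, k ≤ m → z m ∈ connectedComponentIn (F k) (z k) := by
  refine Nat.le_induction (mem_connectedComponentIn hk) fun m hkm ih => ?_
  rw [connectedComponentIn_eq ih]
  exact connectedComponentIn_mono _ (hF hkm) (hz m)

lemma connectedComponentIn_preimage_connectedComponentIn (hp : Continuous p) {U : Set Y}
    {x : X} (hx : p x ∈ U) :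
    connectedComponentIn (p ⁻¹' connectedComponentIn U (p x)) x =
      connectedComponentIn (p ⁻¹' U) x := by
  refine subset_antisymm
    (connectedComponentIn_mono _ (preimage_mono (connectedComponentIn_subset _ _))) ?_
  refine isPreconnected_connectedComponentIn.subset_connectedComponentIn
    (mem_connectedComponentIn hx) fun x' hx' => ?_
  have himage : IsPreconnected (p '' connectedComponentIn (p ⁻¹' U) x) :=
    isPreconnected_connectedComponentIn.image _ hp.continuousOn
  exact himage.subset_connectedComponentIn (mem_image_of_mem _ (mem_connectedComponentIn hx))
    (image_subset_iff.2 (connectedComponentIn_subset _ _)) (mem_image_of_mem _ hx')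

namespace MapsHomeomorphicallyOnto

variable {V : Set X} {U : Set Y}

lemma image_eq (h : MapsHomeomorphicallyOnto p V U) : p '' V = U := by
  obtain ⟨e, he⟩ := h
  ext y
  refine ⟨?_, fun hy => ⟨e.symm ⟨y, hy⟩, (e.symm ⟨y, hy⟩).2, ?_⟩⟩
  · rintro ⟨x, hx, rfl⟩
    exact he ⟨x, hx⟩ ▸ (e ⟨x, hx⟩).2
  · rw [← he, e.apply_symm_apply]

lemma isPreconnected_inter_preimage (h : MapsHomeomorphicallyOnto p V U) {T : Set Y}
    (hT : IsPreconnected T) (hTU : T ⊆ U) : IsPreconnected (V ∩ p ⁻¹' T) := by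
  obtain ⟨e, he⟩ := h
  have hT' : IsPreconnected ((↑) ⁻¹' T : Set U) := by
    rwa [← IsInducing.subtypeVal.isPreconnected_image, Subtype.image_preimage_coe,
      inter_eq_right.2 hTU]
  have hlift : V ∩ p ⁻¹' T = (fun u => (e.symm u : X)) '' ((↑) ⁻¹' T) := by
    ext x
    constructor
    · rintro ⟨hxV, hxT⟩
      refine ⟨e ⟨x, hxV⟩, ?_, by simp⟩
      simpa [mem_preimage, he] using hxT
    · rintro ⟨u, hu, rfl⟩
      refine ⟨(e.symm u).2, ?_⟩
      rwa [mem_preimage, ← he, e.apply_symm_apply]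
  rw [hlift]
  exact hT'.image _ (continuous_subtype_val.comp e.symm.continuous).continuousOn

end MapsHomeomorphicallyOnto

section LocalLifting

variable [LocallyConnectedSpace Y]

lemma exists_mem_nhds_subset_image_connectedComponentIn {W : Set Y} (hW : IsOpen W)
    {y : Y} (hy : y ∈ W) (hord : y ∈ OrdBase p) :
    ∃ W' ∈ 𝓝 y, ∀ x, p x ∈ W' → W' ⊆ p '' connectedComponentIn (p ⁻¹' W) x := by
  obtain ⟨U, hUo, hyU, heven⟩ := hord
  set W' := connectedComponentIn (U ∩ W) y
  have hW'U : W' ⊆ U := (connectedComponentIn_subset _ _).trans inter_subset_left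
  have hW'W : W' ⊆ W := (connectedComponentIn_subset _ _).trans inter_subset_right
  refine ⟨W', (hUo.inter hW).connectedComponentIn.mem_nhds
    (mem_connectedComponentIn ⟨hyU, hy⟩), fun x hx => ?_⟩
  -- the sheet of `p ⁻¹' U` through `x` lifts `W'` to a connected set through `x`
  have hsheet := heven _ ⟨x, hW'U hx, rfl⟩
  have hlift : connectedComponentIn (p ⁻¹' U) x ∩ p ⁻¹' W' ⊆
      connectedComponentIn (p ⁻¹' W) x :=
    (hsheet.isPreconnected_inter_preimage isPreconnected_connectedComponentIn hW'U)
      |>.subset_connectedComponentIn ⟨mem_connectedComponentIn (hW'U hx), hx⟩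
        (inter_subset_right.trans (preimage_mono hW'W))
  calc W' = p '' (connectedComponentIn (p ⁻¹' U) x ∩ p ⁻¹' W') := by
        rw [image_inter_preimage, hsheet.image_eq, inter_eq_right.2 hW'U]
    _ ⊆ p '' connectedComponentIn (p ⁻¹' W) x := image_mono hlift

lemma mem_interior_image_union_interior_compl {W : Set Y} (hW : IsOpen W) {y : Y}
    (hy : y ∈ W) (hord : y ∈ OrdBase p) (x₀ : X) :
    y ∈ interior (p '' connectedComponentIn (p ⁻¹' W) x₀) ∪
      interior (p '' connectedComponentIn (p ⁻¹' W) x₀)ᶜ := by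
  obtain ⟨W', hW', hsub⟩ := exists_mem_nhds_subset_image_connectedComponentIn hW hy hord
  rw [interior_compl]
  by_cases hcl : y ∈ closure (p '' connectedComponentIn (p ⁻¹' W) x₀)
  · obtain ⟨_, hxW', x, hx, rfl⟩ := mem_closure_iff_nhds.1 hcl W' hW'
    have hW'sub := hsub x hxW'
    rw [← connectedComponentIn_eq hx] at hW'sub
    exact Or.inl (mem_interior_iff_mem_nhds.2 (mem_of_superset hW' hW'sub))
  · exact Or.inr hcl

end LocalLifting

lemma IsCompleteSpread.exists_forall_mem_connectedComponentIn [T1Space Y]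
    (hp : IsCompleteSpread p) {y : Y} (hy : y ∈ closure (range p)) {W : ℕ → Set Y}
    (hW : (𝓝 y).HasAntitoneBasis W) (hWo : ∀ n, IsOpen (W n)) (hWc : ∀ n, IsConnected (W n))
    {z : ℕ → X} (hzW : ∀ n, p (z n) ∈ W n)
    (hz : ∀ n, z (n + 1) ∈ connectedComponentIn (p ⁻¹' W n) (z n)) :
    ∃ x, p x = y ∧ ∀ n, x ∈ connectedComponentIn (p ⁻¹' W n) (z n) := by
  classical
  let N := {U : Set Y // IsOpen U ∧ IsConnected U ∧ y ∈ U}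
  have hex (U : N) : ∃ n, W n ⊆ U.1 := hW.mem_iff.1 (U.2.1.mem_nhds U.2.2.2)
  -- `χ U` is the component of `p ⁻¹' U` that eventually contains the whole sequence `z`
  let χ (U : N) : Set X := connectedComponentIn (p ⁻¹' U.1) (z (Nat.find (hex U)))
  have hstable {U : Set Y} {k m : ℕ} (hkm : k ≤ m) (hkU : W k ⊆ U) :
      connectedComponentIn (p ⁻¹' U) (z m) = connectedComponentIn (p ⁻¹' U) (z k) :=
    (connectedComponentIn_eq <| connectedComponentIn_mono _ (preimage_mono hkU) <|
      mem_connectedComponentIn_of_le (fun _ _ h => preimage_mono (hW.2 h)) hz (hzW k) m hkm).symm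
  have hχ (U : N) {m : ℕ} (hm : Nat.find (hex U) ≤ m) :
      connectedComponentIn (p ⁻¹' U.1) (z m) = χ U :=
    hstable hm (Nat.find_spec (hex U))
  have hcomp (U : N) : IsComponentOf (χ U) (p ⁻¹' U.1) :=
    ⟨_, Nat.find_spec (hex U) (hzW _), rfl⟩
  have hmono (U V : N) (hUV : U.1 ⊆ V.1) : χ U ⊆ χ V := by
    rw [← hχ V (Nat.find_min' _ ((Nat.find_spec (hex U)).trans hUV))]
    exact connectedComponentIn_mono _ (preimage_mono hUV)
  obtain ⟨x, hx⟩ := hp.2 y hy χ hcomp hmono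
  have hmem (n : ℕ) : x ∈ connectedComponentIn (p ⁻¹' W n) (z n) := by
    let U : N := ⟨W n, hWo n, hWc n, mem_of_mem_nhds (hW.mem n)⟩
    rw [hχ U (Nat.find_min' _ subset_rfl)]
    exact mem_iInter.1 hx U
  refine ⟨x, ?_, hmem⟩
  refine (specializes_iff_pure.2 <| hW.1.ge_iff.2 fun n _ => ?_).eq
  exact mem_pure.2 (connectedComponentIn_subset (p ⁻¹' W n) _ (hmem n))

namespace IsBranchedCovering

lemma isCompleteSpread (hp : IsBranchedCovering p) : IsCompleteSpread p := hp.1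

lemma continuous (hp : IsBranchedCovering p) : Continuous p := hp.1.1.1

lemma surjective (hp : IsBranchedCovering p) : Function.Surjective p := hp.2.1

lemma dense_ordTotal (hp : IsBranchedCovering p) : Dense (OrdTotal p) := hp.2.2.2.2.1.2.1

lemma dense_ordBase (hp : IsBranchedCovering p) : Dense (OrdBase p) := hp.2.2.2.2.2.2.1

lemma isConnected_inter_ordBase (hp : IsBranchedCovering p) {W : Set Y} (hWo : IsOpen W)
    (hWc : IsConnected W) : IsConnected (W ∩ OrdBase p) :=
  hp.2.2.2.2.2.2.2 W hWo hWc

variable [LocallyConnectedSpace X] [LocallyConnectedSpace Y]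

lemma inter_ordBase_subset_image (hp : IsBranchedCovering p) {W : Set Y} (hWo : IsOpen W)
    (hWc : IsConnected W) {x₀ : X} (hx₀ : p x₀ ∈ W) :
    W ∩ OrdBase p ⊆ p '' connectedComponentIn (p ⁻¹' W) x₀ := by
  set C := connectedComponentIn (p ⁻¹' W) x₀
  have hCo : IsOpen C := (hWo.preimage hp.continuous).connectedComponentIn
  obtain ⟨x₁, hx₁C, hx₁ord⟩ :=
    hp.dense_ordTotal.inter_open_nonempty C hCo ⟨x₀, mem_connectedComponentIn hx₀⟩
  have hpx₁ : p x₁ ∈ W ∩ OrdBase p :=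
    ⟨connectedComponentIn_subset (p ⁻¹' W) _ hx₁C, hx₁ord⟩
  have hcover : W ∩ OrdBase p ⊆ interior (p '' C) ∪ interior (p '' C)ᶜ :=
    fun y hy => mem_interior_image_union_interior_compl hWo hy.1 hy.2 x₀
  have hmeet : (W ∩ OrdBase p ∩ interior (p '' C)).Nonempty := by
    refine ⟨p x₁, hpx₁, (hcover hpx₁).resolve_right fun h => ?_⟩
    exact interior_subset h (mem_image_of_mem p hx₁C)
  refine ((hp.isConnected_inter_ordBase hWo hWc).isPreconnected.subset_left_of_subset_union
    isOpen_interior isOpen_interior ?_ hcover hmeet).trans interior_subset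
  exact (disjoint_compl_right (a := p '' C)).mono interior_subset interior_subset

lemma exists_mem_connectedComponentIn_mem (hp : IsBranchedCovering p) {W : Set Y}
    (hWo : IsOpen W) (hWc : IsConnected W) {x₀ : X} (hx₀ : p x₀ ∈ W) {T : Set Y}
    (hTo : IsOpen T) (hT : T.Nonempty) (hTW : T ⊆ W) :
    ∃ x ∈ connectedComponentIn (p ⁻¹' W) x₀, p x ∈ T := by
  obtain ⟨y, hyT, hyord⟩ := hp.dense_ordBase.inter_open_nonempty T hTo hT
  obtain ⟨x, hx, rfl⟩ := hp.inter_ordBase_subset_image hWo hWc hx₀ ⟨hTW hyT, hyord⟩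
  exact ⟨x, hx, hyT⟩

theorem image_connectedComponentIn [T1Space Y] [FirstCountableTopology Y]
    (hp : IsBranchedCovering p) {W : Set Y} (hWo : IsOpen W) (hWc : IsConnected W) {x₀ : X}
    (hx₀ : p x₀ ∈ W) : p '' connectedComponentIn (p ⁻¹' W) x₀ = W := by
  refine (image_subset_iff.2 (connectedComponentIn_subset _ _)).antisymm fun y hy => ?_
  obtain ⟨B, hB, hBasis⟩ := ((LocallyConnectedSpace.open_connected_basis y).restrict_subset
    (hWo.mem_nhds hy)).exists_antitone_subbasis
  simp only [id] at hBasis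
  have hBne (n : ℕ) : (B n).Nonempty := ⟨y, (hB n).1.2.1⟩
  obtain ⟨z₀, hz₀, hpz₀⟩ :=
    hp.exists_mem_connectedComponentIn_mem hWo hWc hx₀ (hB 0).1.1 (hBne 0) (hB 0).2
  have hstep (n : ℕ) (x : X) (hx : p x ∈ B n) :
      ∃ x' ∈ connectedComponentIn (p ⁻¹' B n) x, p x' ∈ B (n + 1) :=
    hp.exists_mem_connectedComponentIn_mem (hB n).1.1 (hB n).1.2.2 hx (hB (n + 1)).1.1
      (hBne (n + 1)) (hBasis.2 n.le_succ)
  choose! next hnext hpnext using hstep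
  let z (n : ℕ) : X := Nat.rec z₀ next n
  have hzB (n : ℕ) : p (z n) ∈ B n := by
    induction n with
    | zero => exact hpz₀
    | succ n ih => exact hpnext n (z n) ih
  obtain ⟨x, rfl, hx⟩ := hp.isCompleteSpread.exists_forall_mem_connectedComponentIn
    (by simp [hp.surjective.range_eq]) hBasis (fun n => (hB n).1.1)
    (fun n => (hB n).1.2.2) hzB (fun n => hnext n (z n) (hzB n))
  refine ⟨x, ?_, rfl⟩
  rw [connectedComponentIn_eq hz₀]
  exact connectedComponentIn_mono _ (preimage_mono (hB 0).2) (hx 0)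

theorem isOpenMap [T1Space Y] [FirstCountableTopology Y] (hp : IsBranchedCovering p) :
    IsOpenMap p := by
  refine hp.isCompleteSpread.1.2.isOpenMap_iff.2 ?_
  rintro _ ⟨U, hUo, x, hx, rfl⟩
  rw [← connectedComponentIn_preimage_connectedComponentIn (U := U) hp.continuous hx,
    hp.image_connectedComponentIn hUo.connectedComponentIn
      (isConnected_connectedComponentIn_iff.2 hx) (mem_connectedComponentIn hx)]
  exact hUo.connectedComponentIn

end IsBranchedCovering

end

theorem stmt10_general {X Y : Type*} [TopologicalSpace X] [TopologicalSpace Y]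
    [T2Space Y] [FirstCountableTopology Y]
    [LocallyPathConnectedSpace X] [LocallyPathConnectedSpace Y]
    (p : X → Y) (hp : IsBranchedCovering p) :
    (∀ U : Set Y, IsOpen U → IsConnected U →
      ∀ V : Set X, IsComponentOf V (p ⁻¹' U) → p '' V = U) ∧
    IsOpenMap p := by
  refine ⟨?_, hp.isOpenMap⟩
  rintro U hUo hUc _ ⟨x, hx, rfl⟩
  exact hp.image_connectedComponentIn hUo hUc hx

theorem stmt10 {X Y : Type*} [TopologicalSpace X] [TopologicalSpace Y]
    [T2Space X] [T2Space Y] [FirstCountableTopology X] [FirstCountableTopology Y]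
    [LocallyPathConnectedSpace X] [LocallyPathConnectedSpace Y]
    (p : X → Y) (hp : IsBranchedCovering p) :
    (∀ U : Set Y, IsOpen U → IsConnected U →
      ∀ V : Set X, IsComponentOf V (p ⁻¹' U) → p '' V = U) ∧
    IsOpenMap p :=
  stmt10_general p hp
end

section
/- Let p : X → Y be a quasi-Galoisian branched covering. Then for every a ∈ Y and â ∈ p⁻¹(a), the orbit Γ(X/Y)·â of the automorphism group is dense in the fiber p⁻¹(a). -/
/-- A branched covering is *quasi-Galoisian* if its automorphism group acts transitively
on the connected components of the preimage of every open subset of the base. -/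
def QuasiGaloisian {X Y : Type*} [TopologicalSpace X] [TopologicalSpace Y]
    (p : X → Y) : Prop :=
  IsBranchedCovering p ∧ ∀ U : Set Y, IsOpen U → ∀ V W : Set X,
    IsComponentOf V (p ⁻¹' U) → IsComponentOf W (p ⁻¹' U) →
    ∃ φ : X ≃ₜ X, (∀ z, p (φ z) = p z) ∧ φ '' V = W

/-!
The components of preimages of open sets form a basis of `X`, so it suffices that the orbit of
`ahat` meets every such component `V` through a point of the fibre. Then `V` lies over an open
`U ∋ a`, and an automorphism carrying the component of `p ⁻¹' U` through `ahat` onto `V` moves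
`ahat` into `V`.
-/

theorem IsComponentOf.subset {X : Type*} [TopologicalSpace X] {V S : Set X}
    (hV : IsComponentOf V S) : V ⊆ S := by
  obtain ⟨x, -, rfl⟩ := hV
  exact connectedComponentIn_subset _ _

theorem QuasiGaloisian.exists_apply_mem {X Y : Type*} [TopologicalSpace X] [TopologicalSpace Y]
    {p : X → Y} (hp : QuasiGaloisian p) {U : Set Y} (hU : IsOpen U) {V : Set X}
    (hV : IsComponentOf V (p ⁻¹' U)) {x : X} (hx : p x ∈ U) :
    ∃ φ : X ≃ₜ X, (∀ z, p (φ z) = p z) ∧ φ x ∈ V := by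
  obtain ⟨φ, hφp, hφV⟩ := hp.2 U hU _ V ⟨x, hx, rfl⟩ hV
  exact ⟨φ, hφp, hφV ▸ Set.mem_image_of_mem φ (mem_connectedComponentIn hx)⟩

theorem stmt15_general {X Y : Type*} [TopologicalSpace X] [TopologicalSpace Y]
    (p : X → Y) (hp : QuasiGaloisian p) (a : Y) (ahat : X) (haa : p ahat = a) :
    p ⁻¹' {a} ⊆ closure {y : X | ∃ φ : X ≃ₜ X, (∀ z, p (φ z) = p z) ∧ y = φ ahat} := by
  intro b (hb : p b = a)
  have hbasis := hp.1.1.1.2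
  rw [hbasis.mem_closure_iff]
  rintro V ⟨U, hU, hV⟩ hbV
  have hahat : p ahat ∈ U := haa ▸ hb ▸ hV.subset hbV
  obtain ⟨φ, hφp, hφV⟩ := hp.exists_apply_mem hU hV hahat
  exact ⟨φ ahat, hφV, φ, hφp, rfl⟩

theorem stmt15 {X Y : Type*} [TopologicalSpace X] [TopologicalSpace Y]
    [T2Space X] [T2Space Y] [FirstCountableTopology X] [FirstCountableTopology Y]
    [LocallyPathConnectedSpace X] [LocallyPathConnectedSpace Y]
    (p : X → Y) (hp : QuasiGaloisian p) (a : Y) (ahat : X) (haa : p ahat = a) :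
    p ⁻¹' {a} ⊆ closure {y : X | ∃ φ : X ≃ₜ X, (∀ z, p (φ z) = p z) ∧ y = φ ahat} :=
  stmt15_general p hp a ahat haa
end

section
/- Let p : X → Y be a quasi-Galoisian branched covering with Γ(X/Y) countable, and b ∈ Y a point with a countable basis (U_n) of connected neighborhoods. Then the following are equivalent: (i) the fiber p⁻¹(b) is discrete; (ii) p⁻¹(b) is countable; (iii) Γ(X/Y) acts transitively on p⁻¹(b). -/
/-!
Write `F = p⁻¹(b)` and let `Sₙ` be a decreasing basis of connected open neighbourhoods of `b`.
For `x ∈ F` the components of `p⁻¹(Sₙ)` through `x` form a neighbourhood basis of `x`, and by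
completeness every nested sequence of such components meets `F`. If `F` is countable, a Baire
category argument along these components produces a point `x₀ ∈ F` and a component of some
`p⁻¹(Sₙ)` meeting `F` only in `x₀`. Quasi-Galoisian deck transformations map every component of
`p⁻¹(Sₙ)` over `b` onto that one, hence every point of `F` onto `x₀`: the action on `F` is
transitive and `F` is discrete. Conversely a discrete `F` is countable because `X` is second
countable, and a transitive `F` is countable because it is an orbit of the countable group
`Γ(X/Y)`.
-/

open Set Filter Topology

section

variable {X Y : Type*} [TopologicalSpace X] [TopologicalSpace Y]

theorem exists_hasAntitoneBasis_isOpen_isConnected {b : Y} (U : ℕ → Set Y)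
    (hU : ∀ n, IsOpen (U n) ∧ IsConnected (U n) ∧ b ∈ U n) (hbasis : ∀ W ∈ 𝓝 b, ∃ n, U n ⊆ W) :
    ∃ S : ℕ → Set Y, (𝓝 b).HasAntitoneBasis S ∧ ∀ n, IsOpen (S n) ∧ IsConnected (S n) := by
  have hU' : (𝓝 b).HasBasis (fun _ => True) U :=
    ⟨fun W => ⟨fun hW => (hbasis W hW).imp fun _ hn => ⟨trivial, hn⟩,
      fun ⟨n, _, hn⟩ => mem_of_superset ((hU n).1.mem_nhds (hU n).2.2) hn⟩⟩
  have := hU'.isCountablyGenerated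
  obtain ⟨ι, -, hS⟩ := hU'.exists_antitone_subbasis
  exact ⟨_, hS, fun n => ⟨(hU (ι n)).1, (hU (ι n)).2.1⟩⟩

namespace IsSpread

variable {p : X → Y}

theorem isOpen_connectedComponentIn (hp : IsSpread p) {U : Set Y} (hU : IsOpen U) (x : X) :
    IsOpen (connectedComponentIn (p ⁻¹' U) x) := by
  by_cases hx : x ∈ p ⁻¹' U
  · exact hp.2.isOpen ⟨U, hU, x, hx, rfl⟩
  · simp [connectedComponentIn_eq_empty hx]

theorem eventually_connectedComponentIn_subset (hp : IsSpread p) {b : Y} {S : ℕ → Set Y}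
    (hS : (𝓝 b).HasAntitoneBasis S) {x : X} (hx : p x = b) {O : Set X} (hO : IsOpen O)
    (hxO : x ∈ O) : ∀ᶠ n in atTop, connectedComponentIn (p ⁻¹' S n) x ⊆ O := by
  obtain ⟨_, ⟨W, hW, x₁, -, rfl⟩, hxV, hVO⟩ := hp.2.exists_subset_of_mem_open hxO hO
  rw [connectedComponentIn_eq hxV] at hVO
  have hbW : b ∈ W := hx ▸ (connectedComponentIn_subset _ x₁ hxV : x ∈ p ⁻¹' W)
  exact (hS.eventually_subset (hW.mem_nhds hbW)).mono fun n hn =>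
    (connectedComponentIn_mono x (preimage_mono hn)).trans hVO

theorem exists_connectedComponentIn_notMem [T1Space X] (hp : IsSpread p) {b : Y}
    {S : ℕ → Set Y} (hS : (𝓝 b).HasAntitoneBasis S)
    (hno : ∀ x, p x = b → ∀ n, ∃ y, p y = b ∧ y ∈ connectedComponentIn (p ⁻¹' S n) x ∧ y ≠ x)
    {z : X} (hz : p z = b) (n : ℕ) (w : X) :
    ∃ z', p z' = b ∧ ∃ n' > n, z' ∈ connectedComponentIn (p ⁻¹' S n) z ∧
      w ∉ connectedComponentIn (p ⁻¹' S n') z' := by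
  obtain ⟨z', hz', hz'z, hz'w⟩ :
      ∃ z', p z' = b ∧ z' ∈ connectedComponentIn (p ⁻¹' S n) z ∧ z' ≠ w := by
    by_cases hzw : z = w
    · obtain ⟨y, hy, hyz, hyne⟩ := hno z hz n
      exact ⟨y, hy, hyz, hzw ▸ hyne⟩
    · exact ⟨z, hz, mem_connectedComponentIn (by simp [hz, mem_of_mem_nhds (hS.mem n)]), hzw⟩
  obtain ⟨n', hn', hsub⟩ := ((eventually_gt_atTop n).and
    (hp.eventually_connectedComponentIn_subset hS hz' isOpen_compl_singleton hz'w)).exists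
  exact ⟨z', hz', n', hn', hz'z, fun hw => hsub hw rfl⟩

end IsSpread

namespace IsCompleteSpread

variable {p : X → Y} {b : Y} {S : ℕ → Set Y}

theorem exists_mem_connectedComponentIn_of_nested [T1Space Y] (hp : IsCompleteSpread p)
    (hS : (𝓝 b).HasAntitoneBasis S) (hSo : ∀ n, IsOpen (S n)) (hSc : ∀ n, IsConnected (S n))
    {z : ℕ → X} (hz : ∀ k, p (z k) = b)
    (hnext : ∀ k, z (k + 1) ∈ connectedComponentIn (p ⁻¹' S k) (z k)) :
    ∃ x, p x = b ∧ ∀ k, x ∈ connectedComponentIn (p ⁻¹' S k) (z k) := by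
  have nested : ∀ k j, k ≤ j → z j ∈ connectedComponentIn (p ⁻¹' S k) (z k) := by
    intro k j hkj
    induction j, hkj using Nat.le_induction with
    | base => exact mem_connectedComponentIn (by simp [hz, mem_of_mem_nhds (hS.mem k)])
    | succ j hkj ih =>
      rw [connectedComponentIn_eq ih]
      exact connectedComponentIn_mono _ (preimage_mono (hS.antitone hkj)) (hnext j)
  have stable : ∀ (V : Set Y) k j, k ≤ j → S k ⊆ V →
      connectedComponentIn (p ⁻¹' V) (z j) = connectedComponentIn (p ⁻¹' V) (z k) :=
    fun V k j hkj hSV =>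
      (connectedComponentIn_eq (connectedComponentIn_mono _ (preimage_mono hSV)
        (nested k j hkj))).symm
  have : ∀ V : {V : Set Y // IsOpen V ∧ IsConnected V ∧ b ∈ V}, ∃ k, S k ⊆ V.1 :=
    fun V => hS.mem_iff.1 (V.2.1.mem_nhds V.2.2.2)
  choose K hK using this
  -- completeness is indexed by all connected open neighbourhoods `V` of `b`: over `V` take the
  -- component through the first `z k` whose component already lies over `V`
  obtain ⟨x, hx⟩ := hp.2 b (subset_closure ⟨z 0, hz 0⟩)
    (fun V => connectedComponentIn (p ⁻¹' V.1) (z (K V)))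
    (fun V => ⟨z (K V), by simp [hz, V.2.2.2], rfl⟩)
    (fun V W hVW => by
      rw [← stable V.1 _ (max (K V) (K W)) (le_max_left _ _) (hK V),
        ← stable W.1 _ (max (K V) (K W)) (le_max_right _ _) (hK W)]
      exact connectedComponentIn_mono _ (preimage_mono hVW))
  have hxk : ∀ k, x ∈ connectedComponentIn (p ⁻¹' S k) (z k) := by
    intro k
    have := mem_iInter.1 hx ⟨S k, hSo k, hSc k, mem_of_mem_nhds (hS.mem k)⟩
    rwa [← stable _ _ (max (K _) k) (le_max_left _ _) (hK _),
      stable _ k _ (le_max_right _ _) subset_rfl] at this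
  refine ⟨x, ?_, hxk⟩
  by_contra hne
  obtain ⟨k, hk⟩ := hS.mem_iff.1 (isOpen_compl_singleton.mem_nhds (Ne.symm hne))
  exact hk (connectedComponentIn_subset _ (z k) (hxk k) : x ∈ p ⁻¹' S k) rfl

theorem exists_isolated_of_countable_fiber [T1Space X] [T1Space Y] (hp : IsCompleteSpread p)
    (hS : (𝓝 b).HasAntitoneBasis S) (hSo : ∀ n, IsOpen (S n)) (hSc : ∀ n, IsConnected (S n))
    (hne : (p ⁻¹' {b}).Nonempty) (hcnt : (p ⁻¹' {b}).Countable) :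
    ∃ x₀, p x₀ = b ∧ ∃ n, ∀ y, p y = b → y ∈ connectedComponentIn (p ⁻¹' S n) x₀ → y = x₀ := by
  by_contra! hno
  obtain ⟨e, he⟩ := hcnt.exists_eq_range hne
  have : Nonempty X := ⟨hne.some⟩
  choose! next hnext level hlevel hmem hnotMem using
    fun z (hz : p z = b) => hp.1.exists_connectedComponentIn_notMem hS hno hz
  -- the `k`-th step shrinks the current component so that it misses `e k`
  let seq : ℕ → X × ℕ := fun k => Nat.rec (hne.some, 0)
    (fun k s => (next s.1 s.2 (e k), level s.1 s.2 (e k))) k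
  have hseq : ∀ k, p (seq k).1 = b := by
    intro k
    induction k with
    | zero => exact hne.some_mem
    | succ k ih => exact hnext _ ih _ _
  have hmono : StrictMono fun k => (seq k).2 :=
    strictMono_nat_of_lt_succ fun k => hlevel _ (hseq k) _ _
  obtain ⟨x, hx, hxmem⟩ := hp.exists_mem_connectedComponentIn_of_nested
    (hS.comp_strictMono hmono) (fun _ => hSo _) (fun _ => hSc _) hseq
    (fun k => hmem _ (hseq k) _ _)
  obtain ⟨k, rfl⟩ : x ∈ range e := he ▸ hx
  exact hnotMem _ (hseq k) _ _ (hxmem (k + 1))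

end IsCompleteSpread

theorem QuasiGaloisian.exists_apply_eq_of_isolated {p : X → Y} (hp : QuasiGaloisian p)
    {U : Set Y} (hU : IsOpen U) {b : Y} (hb : b ∈ U) {x₀ : X} (hx₀ : p x₀ = b)
    (hiso : ∀ y, p y = b → y ∈ connectedComponentIn (p ⁻¹' U) x₀ → y = x₀) {y : X}
    (hy : p y = b) : ∃ φ : X ≃ₜ X, (∀ z, p (φ z) = p z) ∧ φ y = x₀ := by
  have hyU : y ∈ p ⁻¹' U := mem_preimage.2 (hy ▸ hb)
  obtain ⟨φ, hφ, himage⟩ := hp.2 U hU _ _ ⟨y, hyU, rfl⟩ ⟨x₀, mem_preimage.2 (hx₀ ▸ hb), rfl⟩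
  exact ⟨φ, hφ, hiso _ ((hφ y).trans hy)
    (himage ▸ mem_image_of_mem φ (mem_connectedComponentIn hyU))⟩

theorem discreteTopology_of_forall_exists_homeomorph_apply_eq {s O : Set X} {x₀ : X}
    (hO : IsOpen O) (hx₀ : x₀ ∈ O) (hiso : ∀ y ∈ s, y ∈ O → y = x₀)
    (hmove : ∀ y ∈ s, ∃ φ : X ≃ₜ X, MapsTo φ s s ∧ φ y = x₀) : DiscreteTopology s := by
  rw [discreteTopology_iff_isOpen_singleton]
  rintro ⟨y, hy⟩
  obtain ⟨φ, hφs, hφy⟩ := hmove y hy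
  refine isOpen_induced_iff.2 ⟨φ ⁻¹' O, hO.preimage φ.continuous, ?_⟩
  ext ⟨w, hw⟩
  simp only [mem_preimage, mem_singleton_iff, Subtype.mk.injEq]
  exact ⟨fun hwO => φ.injective (by rw [hiso _ (hφs hw) hwO, hφy]), fun h => h ▸ hφy ▸ hx₀⟩

end

theorem exists_homeomorph_apply_eq_of_forall_apply_eq {X Y : Type*} [TopologicalSpace X]
    {p : X → Y} {s : Set X} {x₀ : X}
    (hmove : ∀ y ∈ s, ∃ φ : X ≃ₜ X, (∀ z, p (φ z) = p z) ∧ φ y = x₀) :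
    ∀ x ∈ s, ∀ y ∈ s, ∃ φ : X ≃ₜ X, (∀ z, p (φ z) = p z) ∧ φ x = y := by
  intro x hx y hy
  obtain ⟨φ, hφ, hφx⟩ := hmove x hx
  obtain ⟨ψ, hψ, hψy⟩ := hmove y hy
  refine ⟨φ.trans ψ.symm, fun z => ?_, by simp [hφx, ← hψy]⟩
  simpa [hφ] using (hψ (ψ.symm (φ z))).symm

theorem countable_of_forall_exists_homeomorph_apply_eq {X Y : Type*} [TopologicalSpace X]
    {p : X → Y} [Countable {φ : X ≃ₜ X // ∀ z, p (φ z) = p z}] {s : Set X} {x₀ : X}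
    (h : ∀ y ∈ s, ∃ φ : X ≃ₜ X, (∀ z, p (φ z) = p z) ∧ φ x₀ = y) : s.Countable := by
  refine (countable_range fun φ : {φ : X ≃ₜ X // ∀ z, p (φ z) = p z} => φ.1 x₀).mono
    fun y hy => ?_
  obtain ⟨φ, hφ, hφy⟩ := h y hy
  exact ⟨⟨φ, hφ⟩, hφy⟩

theorem stmt16_general {X Y : Type*} [TopologicalSpace X] [TopologicalSpace Y]
    [T2Space X] [T2Space Y]
    [SecondCountableTopology X]
    (p : X → Y) (hp : QuasiGaloisian p)
    (hΓ : Countable {φ : X ≃ₜ X // ∀ z, p (φ z) = p z})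
    (b : Y) (Un : ℕ → Set Y)
    (hUn : ∀ n, IsOpen (Un n) ∧ IsConnected (Un n) ∧ b ∈ Un n)
    (hbasis : ∀ W ∈ nhds b, ∃ n, Un n ⊆ W) :
    (DiscreteTopology (p ⁻¹' {b}) ↔ (p ⁻¹' {b}).Countable) ∧
    (DiscreteTopology (p ⁻¹' {b}) ↔
      ∀ x ∈ p ⁻¹' {b}, ∀ y ∈ p ⁻¹' {b},
        ∃ φ : X ≃ₜ X, (∀ z, p (φ z) = p z) ∧ φ x = y) := by
  obtain ⟨S, hS, hSoc⟩ := exists_hasAntitoneBasis_isOpen_isConnected Un hUn hbasis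
  obtain ⟨x₁, hx₁⟩ := hp.1.2.1 b
  have countable_imp : (p ⁻¹' {b}).Countable → DiscreteTopology (p ⁻¹' {b}) ∧
      ∀ x ∈ p ⁻¹' {b}, ∀ y ∈ p ⁻¹' {b}, ∃ φ : X ≃ₜ X, (∀ z, p (φ z) = p z) ∧ φ x = y := by
    intro hcnt
    obtain ⟨x₀, hx₀, n, hiso⟩ := hp.1.1.exists_isolated_of_countable_fiber hS
      (fun n => (hSoc n).1) (fun n => (hSoc n).2) ⟨x₁, hx₁⟩ hcnt
    have hb : b ∈ S n := mem_of_mem_nhds (hS.mem n)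
    have hmove : ∀ y ∈ p ⁻¹' {b}, ∃ φ : X ≃ₜ X, (∀ z, p (φ z) = p z) ∧ φ y = x₀ :=
      fun y hy => hp.exists_apply_eq_of_isolated (hSoc n).1 hb hx₀ hiso hy
    refine ⟨discreteTopology_of_forall_exists_homeomorph_apply_eq
      (hp.1.1.1.isOpen_connectedComponentIn (hSoc n).1 x₀)
      (mem_connectedComponentIn (by simp [hx₀, hb])) hiso fun y hy => ?_,
      exists_homeomorph_apply_eq_of_forall_apply_eq hmove⟩
    obtain ⟨φ, hφ, hφy⟩ := hmove y hy
    exact ⟨φ, fun z hz => (hφ z).trans hz, hφy⟩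
  have discrete_imp : DiscreteTopology (p ⁻¹' {b}) → (p ⁻¹' {b}).Countable :=
    (HereditarilyLindelofSpace.isLindelof _).countable
  have transitive_imp : (∀ x ∈ p ⁻¹' {b}, ∀ y ∈ p ⁻¹' {b},
      ∃ φ : X ≃ₜ X, (∀ z, p (φ z) = p z) ∧ φ x = y) → (p ⁻¹' {b}).Countable :=
    fun htrans => countable_of_forall_exists_homeomorph_apply_eq (htrans x₁ hx₁)
  exact ⟨⟨discrete_imp, fun h => (countable_imp h).1⟩,
    ⟨fun h => (countable_imp (discrete_imp h)).2, fun h => (countable_imp (transitive_imp h)).1⟩⟩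

theorem stmt16 {X Y : Type*} [TopologicalSpace X] [TopologicalSpace Y]
    [T2Space X] [T2Space Y] [FirstCountableTopology X] [FirstCountableTopology Y]
    [SecondCountableTopology X] [SecondCountableTopology Y]
    [LocallyPathConnectedSpace X] [LocallyPathConnectedSpace Y]
    (p : X → Y) (hp : QuasiGaloisian p)
    (hΓ : Countable {φ : X ≃ₜ X // ∀ z, p (φ z) = p z})
    (b : Y) (Un : ℕ → Set Y)
    (hUn : ∀ n, IsOpen (Un n) ∧ IsConnected (Un n) ∧ b ∈ Un n)
    (hbasis : ∀ W ∈ nhds b, ∃ n, Un n ⊆ W) :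
    (DiscreteTopology (p ⁻¹' {b}) ↔ (p ⁻¹' {b}).Countable) ∧
    (DiscreteTopology (p ⁻¹' {b}) ↔
      ∀ x ∈ p ⁻¹' {b}, ∀ y ∈ p ⁻¹' {b},
        ∃ φ : X ≃ₜ X, (∀ z, p (φ z) = p z) ∧ φ x = y) :=
  stmt16_general p hp hΓ b Un hUn hbasis
end
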